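/- arXiv:1907.05408 — 3 statements merged into one kernel-verified Lean document; each statement's English description precedes it below -/
import Mathlib

section
/- Let p ∈ (0,1], γ > 0, and Y a nonnegative random variable with E[Y^2] < ∞ and E[Y^2] > 0 or γ > 0 with p < 1. Set E[T] = (1/p-1)γ + E[Y] and E[T^2] = ((2-p)/p^2 - 2/p + 1)γ^2 + 2(1/p-1)γE[Y] + E[Y^2]. Then (1/2)E[T^2]/E[T] > (1/p - 1)γ, equivalently the zero-wait long-term average age λ = E[Y] + (1/2)E[T^2]/E[T] satisfies λ > E[T]. -/
open MeasureTheory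

/-- Under the γ-cutoff policy (Lemma 2 of the paper): with `p ∈ (0,1]`, `γ > 0`,
`Y ≥ 0` a nonnegative random variable with finite, strictly positive second moment,
`E[T] = (1/p-1)γ + E[Y]` and `E[T^2]` as computed, we have
`(1/2)E[T^2]/E[T] > (1/p-1)γ`, equivalently the zero-wait average age
`λ = E[Y] + (1/2)E[T^2]/E[T]` satisfies `λ > E[T]`. -/
theorem stmt_5 {Ω : Type*} [MeasurableSpace Ω] (μ : Measure Ω) [IsProbabilityMeasure μ]
    (p : ℝ) (hp : 0 < p) (hp1 : p ≤ 1) (γ : ℝ) (hγ : 0 < γ)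
    (Y : Ω → ℝ) (hYnn : ∀ᵐ ω ∂μ, 0 ≤ Y ω)
    (hYint : Integrable Y μ) (hY2int : Integrable (fun ω => (Y ω) ^ 2) μ)
    (hY2pos : 0 < ∫ ω, (Y ω) ^ 2 ∂μ)
    (ET ET2 : ℝ)
    (hET : ET = (1 / p - 1) * γ + ∫ ω, Y ω ∂μ)
    (hET2 : ET2 = ((2 - p) / p ^ 2 - 2 / p + 1) * γ ^ 2
      + 2 * (1 / p - 1) * γ * (∫ ω, Y ω ∂μ) + ∫ ω, (Y ω) ^ 2 ∂μ) :
    (1 / p - 1) * γ < (1 / 2) * ET2 / ET ∧ ET < (∫ ω, Y ω ∂μ) + (1 / 2) * ET2 / ET := by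
  set m := ∫ ω, Y ω ∂μ with hmdef
  set s := ∫ ω, (Y ω) ^ 2 ∂μ with hsdef
  have hm0 : 0 ≤ m := integral_nonneg_of_ae hYnn
  have hm : 0 < m := by
    rcases hm0.lt_or_eq with h | h
    · exact h
    · exfalso
      have hz : Y =ᵐ[μ] 0 := (integral_eq_zero_iff_of_nonneg_ae hYnn hYint).mp h.symm
      have hz2 : (fun ω => (Y ω) ^ 2) =ᵐ[μ] 0 := hz.mono (fun ω hω => by
        simp only [Pi.zero_apply] at hω ⊢; simp [hω])
      have : s = 0 := by
        rw [hsdef, integral_congr_ae hz2]; simp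
      linarith [hY2pos]
  have ha : 0 ≤ 1 / p - 1 := by
    rw [sub_nonneg, le_div_iff₀ hp]
    linarith
  have hETpos : 0 < ET := by
    rw [hET]
    have := mul_nonneg ha hγ.le
    linarith
  have hq : p * (1 / p) = 1 := mul_one_div_cancel hp.ne'
  have key : (1 / p - 1) * γ * ET < 1 / 2 * ET2 := by
    rw [hET, hET2]
    have hp2 : (2 - p) / p ^ 2 = 2 * (1/p) * (1/p) - 1/p := by
      field_simp
    have hp3 : 2 / p = 2 * (1/p) := by ring
    rw [hp2, hp3]
    nlinarith [mul_nonneg ha (sq_nonneg γ), hY2pos]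
  constructor
  · rw [lt_div_iff₀ hETpos]
    exact key
  · have : ET * ET < ((∫ ω, Y ω ∂μ) + 1 / 2 * ET2 / ET) * ET := by
      rw [add_mul, div_mul_cancel₀ _ hETpos.ne']
      nlinarith [key]
    exact lt_of_mul_lt_mul_right this hETpos.le
end

section
/- Let p ∈ (0,1], γ ≥ c ≥ 0, and Y a random variable with c ≤ Y ≤ γ a.s. Let E[T] = (1/p-1)γ + E[Y] > 0 and E[T^2] = ((2-p)/p^2 - 2/p + 1)γ^2 + 2(1/p-1)γE[Y] + E[Y^2]. Then the inequality E[Y] + (1/2)E[T^2]/E[T] ≤ E[T] + c holds if and only if ((1/2)(1/p - 1)γ^2 + (1/2)E[Y^2]) / ((1/p - 1)γ + E[Y]) ≤ c. -/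
open MeasureTheory

/-- Lemma 3 of the paper: necessary and sufficient condition for optimality of the
zero-wait policy. With `p ∈ (0,1]`, `γ ≥ c ≥ 0`, `Y` a random variable with
`c ≤ Y ≤ γ` a.s., `E[T] = (1/p-1)γ + E[Y] > 0` and `E[T^2]` as computed, the
inequality `E[Y] + (1/2)E[T^2]/E[T] ≤ E[T] + c` holds iff
`((1/2)(1/p-1)γ^2 + (1/2)E[Y^2]) / ((1/p-1)γ + E[Y]) ≤ c`. -/
theorem stmt_6 {Ω : Type*} [MeasurableSpace Ω] (μ : Measure Ω) [IsProbabilityMeasure μ]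
    (p : ℝ) (hp : 0 < p) (hp1 : p ≤ 1) (c γ : ℝ) (hc : 0 ≤ c) (hcγ : c ≤ γ)
    (Y : Ω → ℝ) (hYm : Measurable Y) (hYbd : ∀ᵐ ω ∂μ, c ≤ Y ω ∧ Y ω ≤ γ)
    (ET ET2 : ℝ)
    (hET : ET = (1 / p - 1) * γ + ∫ ω, Y ω ∂μ) (hETpos : 0 < ET)
    (hET2 : ET2 = ((2 - p) / p ^ 2 - 2 / p + 1) * γ ^ 2
      + 2 * (1 / p - 1) * γ * (∫ ω, Y ω ∂μ) + ∫ ω, (Y ω) ^ 2 ∂μ) :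
    (∫ ω, Y ω ∂μ) + (1 / 2) * ET2 / ET ≤ ET + c ↔
      ((1 / 2) * (1 / p - 1) * γ ^ 2 + (1 / 2) * ∫ ω, (Y ω) ^ 2 ∂μ)
        / ((1 / p - 1) * γ + ∫ ω, Y ω ∂μ) ≤ c := by
  set EY := ∫ ω, Y ω ∂μ with hEY
  set EY2 := ∫ ω, (Y ω) ^ 2 ∂μ with hEY2
  subst hET hET2
  set D := (1 / p - 1) * γ + EY with hD
  have hd : 0 < D := hETpos
  have hp' : p ≠ 0 := ne_of_gt hp
  have num : ((2 - p) / p ^ 2 - 2 / p + 1) * γ ^ 2 + 2 * (1 / p - 1) * γ * EY + EY2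
      = 2 * ((1 / p - 1) * γ) * D + ((1 / p - 1) * γ ^ 2 + EY2) := by
    rw [hD]; field_simp; ring
  rw [num]
  have split : (1 / 2) * (2 * ((1 / p - 1) * γ) * D + ((1 / p - 1) * γ ^ 2 + EY2)) / D
      = (1 / p - 1) * γ + (1 / 2) * ((1 / p - 1) * γ ^ 2 + EY2) / D := by
    field_simp [hd.ne']
  rw [split]
  have h1 : EY + ((1 / p - 1) * γ + (1 / 2) * ((1 / p - 1) * γ ^ 2 + EY2) / D) ≤ D + c
      ↔ (1 / 2) * ((1 / p - 1) * γ ^ 2 + EY2) / D ≤ c := by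
    rw [hD]; constructor <;> intro h <;> linarith
  rw [h1, div_le_iff₀ hd, div_le_iff₀ hd]
  constructor <;> intro h <;> nlinarith [h]
end

section
/- For the shifted exponential service time with shift c > 0 and rate 1, and cutoff γ ≥ c, the zero-wait optimality condition ((1/2)(1/p-1)γ^2 + (1/2)E[Y^2]) / ((1/p-1)γ + E[Y]) ≤ c, with p = 1 - e^{-(γ-c)}, E[Y] = (1+c-(1+γ)e^{-(γ-c)})/p, E[Y^2] = (2+2c+c^2-(2+2γ+γ^2)e^{-(γ-c)})/p, is equivalent to 1 - c^2/2 ≤ (1 + γ - c) e^{-(γ-c)}. -/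
/-- For shifted exponential service times (shift `c > 0`, rate 1) and cutoff `γ > c`,
with `p = 1 - e^{-(γ-c)}`, `E[Y] = (1+c-(1+γ)e^{-(γ-c)})/p` and
`E[Y^2] = (2+2c+c^2-(2+2γ+γ^2)e^{-(γ-c)})/p`, the zero-wait optimality condition
`((1/2)(1/p-1)γ^2 + (1/2)E[Y^2]) / ((1/p-1)γ + E[Y]) ≤ c` is equivalent to
`1 - c^2/2 ≤ (1 + γ - c) e^{-(γ-c)}`. -/
theorem stmt_10 (c γ : ℝ) (hc : 0 < c) (hcγ : c < γ)
    (p EY EY2 : ℝ)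
    (hp : p = 1 - Real.exp (-(γ - c)))
    (hEY : EY = (1 + c - (1 + γ) * Real.exp (-(γ - c))) / p)
    (hEY2 : EY2 = (2 + 2 * c + c ^ 2 - (2 + 2 * γ + γ ^ 2) * Real.exp (-(γ - c))) / p) :
    ((1 / 2) * (1 / p - 1) * γ ^ 2 + (1 / 2) * EY2) / ((1 / p - 1) * γ + EY) ≤ c ↔
      1 - c ^ 2 / 2 ≤ (1 + γ - c) * Real.exp (-(γ - c)) := by
  have he0 : 0 < Real.exp (-(γ - c)) := Real.exp_pos _
  have he1 : Real.exp (-(γ - c)) < 1 := by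
    apply Real.exp_lt_one_iff.mpr; linarith
  set e : ℝ := Real.exp (-(γ - c)) with he
  have hp0 : 0 < p := by rw [hp]; linarith
  have hp' : p ≠ 0 := ne_of_gt hp0
  have h1e : (1:ℝ) - e ≠ 0 := by linarith
  have hd : (1 / p - 1) * γ + EY = (1 + c - e) / p := by
    rw [hEY, hp]; field_simp; ring
  have hn : (1 / 2) * (1 / p - 1) * γ ^ 2 + (1 / 2) * EY2
      = (2 + 2 * c + c ^ 2 - (2 + 2 * γ) * e) / (2 * p) := by
    rw [hEY2, hp]; field_simp; ring
  rw [hn, hd]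
  have hden : 0 < 1 + c - e := by linarith
  have hq : (2 + 2 * c + c ^ 2 - (2 + 2 * γ) * e) / (2 * p) / ((1 + c - e) / p)
      = (2 + 2 * c + c ^ 2 - (2 + 2 * γ) * e) / (2 * (1 + c - e)) := by
    field_simp
  rw [hq, div_le_iff₀ (by linarith : (0:ℝ) < 2 * (1 + c - e))]
  constructor <;> intro h <;> nlinarith
end
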